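/- The configuration (0, 0, π/2) (angle mod 2π) is an interior point of the Dubins reachable set R(t) for all t in some open interval around 4π; more precisely, there exists δ₀ > 0 such that for every t with |t − 4π| < δ₀, (0, 0, π/2) lies in the interior of R(t). -/

import Mathlib

/-- The Dubins reachable set at time `t`: all configurations in ℝ² × (ℝ/2πℤ) reachable
from `(0, 0, π/2)` under `ẋ = cos φ`, `ẏ = sin φ`, `φ̇ = u`, using a measurable control
with values in `[-1, 1]`. -/
noncomputable def DubinsReach (t : ℝ) : Set (ℝ × ℝ × Real.Angle) :=
  {P | ∃ u : ℝ → ℝ, Measurable u ∧ (∀ τ, u τ ∈ Set.Icc (-1 : ℝ) 1) ∧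
    P = (∫ r in (0 : ℝ)..t, Real.cos (Real.pi / 2 + ∫ q in (0 : ℝ)..r, u q),
         ∫ r in (0 : ℝ)..t, Real.sin (Real.pi / 2 + ∫ q in (0 : ℝ)..r, u q),
         (↑(Real.pi / 2 + ∫ q in (0 : ℝ)..t, u q) : Real.Angle))}

/-!
The constant control `u ≡ 1/2` drives the car once around a circle of radius `2`, back to
`(0, 0, π/2)` at time `4π`. Using constant controls `a, b, c` on `[0, 4π/3]`, `[4π/3, 8π/3]` and
`[8π/3, t]` instead, the trajectory consists of three circular arcs and its endpoint is an explicit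
smooth function of `(a, b, c, t)`. Together with `t` itself this is a map `ℝ⁴ → ℝ⁴` whose
derivative at `(1/2, 1/2, 1/2, 4π)` is invertible, so by the inverse function theorem its image
contains a product neighbourhood `U × (4π - δ, 4π + δ)` of `((0, 0, 5π/2), 4π)`. Reducing the
heading modulo `2π` is an open map, which gives the claim.
-/

open Real MeasureTheory intervalIntegral Set Filter Topology

noncomputable section

namespace Dubins

def heading (u : ℝ → ℝ) (r : ℝ) : ℝ := π / 2 + ∫ q in (0 : ℝ)..r, u q

theorem heading_zero (u : ℝ → ℝ) : heading u 0 = π / 2 := by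
  simp [heading]

theorem continuous_heading {u : ℝ → ℝ} (hu : ∀ α β, IntervalIntegrable u volume α β) :
    Continuous (heading u) :=
  continuous_const.add (continuous_primitive hu 0)

theorem heading_eqOn_of_eqOn_Ioc {u : ℝ → ℝ} {m α β : ℝ}
    (hu : ∀ α β, IntervalIntegrable u volume α β) (hαβ : α ≤ β)
    (hm : EqOn u (fun _ ↦ m) (Ioc α β)) :
    EqOn (heading u) (fun r ↦ heading u α + m * (r - α)) (uIcc α β) := by
  intro r hr
  rw [uIcc_of_le hαβ] at hr
  have hconst : ∫ q in α..r, u q = ∫ _ in α..r, m := by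
    refine integral_congr_ae (ae_of_all _ fun q hq ↦ hm ?_)
    rw [uIoc_of_le hr.1] at hq
    exact ⟨hq.1, hq.2.trans hr.2⟩
  simp only [heading, ← integral_add_adjacent_intervals (hu 0 α) (hu α r), hconst,
    intervalIntegral.integral_const, smul_eq_mul]
  ring

theorem integral_cos_of_eqOn_affine {φ : ℝ → ℝ} {m α β : ℝ} (hm : m ≠ 0)
    (hφ : EqOn φ (fun r ↦ φ α + m * (r - α)) (uIcc α β)) :
    ∫ r in α..β, cos (φ r) = (sin (φ β) - sin (φ α)) / m := by
  have hderiv : ∀ r ∈ uIcc α β,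
      HasDerivAt (fun r ↦ sin (φ α + m * (r - α)) / m) (cos (φ α + m * (r - α))) r := by
    intro r _
    have h := ((((hasDerivAt_id r).sub_const α).const_mul m).const_add (φ α)).sin.div_const m
    simpa [mul_div_cancel_right₀ _ hm] using h
  have hcont : Continuous fun r ↦ cos (φ α + m * (r - α)) := by fun_prop
  rw [integral_congr (g := fun r ↦ cos (φ α + m * (r - α))) fun r hr ↦ congrArg cos (hφ hr),
    integral_eq_sub_of_hasDerivAt hderiv (hcont.intervalIntegrable α β),
    hφ right_mem_uIcc]
  simp [div_sub_div_same]

theorem integral_sin_of_eqOn_affine {φ : ℝ → ℝ} {m α β : ℝ} (hm : m ≠ 0)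
    (hφ : EqOn φ (fun r ↦ φ α + m * (r - α)) (uIcc α β)) :
    ∫ r in α..β, sin (φ r) = (cos (φ α) - cos (φ β)) / m := by
  have hderiv : ∀ r ∈ uIcc α β,
      HasDerivAt (fun r ↦ -cos (φ α + m * (r - α)) / m) (sin (φ α + m * (r - α))) r := by
    intro r _
    have h := ((((hasDerivAt_id r).sub_const α).const_mul m).const_add (φ α)).cos.neg.div_const m
    simpa [mul_div_cancel_right₀ _ hm] using h
  have hcont : Continuous fun r ↦ sin (φ α + m * (r - α)) := by fun_prop
  rw [integral_congr (g := fun r ↦ sin (φ α + m * (r - α))) fun r hr ↦ congrArg sin (hφ hr),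
    integral_eq_sub_of_hasDerivAt hderiv (hcont.intervalIntegrable α β),
    hφ right_mem_uIcc]
  simp only [sub_self, mul_zero, add_zero]
  ring

def arcTime : ℝ := 4 * π / 3

theorem arcTime_pos : 0 < arcTime := by unfold arcTime; positivity

def threeArcControl (a b c : ℝ) (τ : ℝ) : ℝ :=
  if τ ≤ arcTime then a else if τ ≤ 2 * arcTime then b else c

theorem measurable_threeArcControl (a b c : ℝ) : Measurable (threeArcControl a b c) :=
  Measurable.ite measurableSet_Iic measurable_const
    (Measurable.ite measurableSet_Iic measurable_const measurable_const)

theorem threeArcControl_mem {a b c : ℝ} {s : Set ℝ} (ha : a ∈ s) (hb : b ∈ s) (hc : c ∈ s)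
    (τ : ℝ) : threeArcControl a b c τ ∈ s := by
  unfold threeArcControl
  split_ifs <;> assumption

theorem intervalIntegrable_threeArcControl (a b c α β : ℝ) :
    IntervalIntegrable (threeArcControl a b c) volume α β := by
  refine (intervalIntegrable_const (c := |a| + |b| + |c|)).mono_fun
    (measurable_threeArcControl a b c).aestronglyMeasurable (ae_of_all _ fun τ ↦ ?_)
  have := abs_nonneg a; have := abs_nonneg b; have := abs_nonneg c
  simp only [threeArcControl, norm_eq_abs]
  split_ifs <;> rw [abs_of_nonneg (by positivity : 0 ≤ |a| + |b| + |c|)] <;> linarith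

def heading₁ (a : ℝ) : ℝ := π / 2 + a * arcTime
def heading₂ (a b : ℝ) : ℝ := heading₁ a + b * arcTime
def heading₃ (a b c t : ℝ) : ℝ := heading₂ a b + c * (t - 2 * arcTime)

/-- An arc of constant curvature `m ≠ 0` turning the heading from `θ` to `θ'` displaces the car
by `((sin θ' - sin θ) / m, (cos θ - cos θ') / m)`. -/
def endpoint (a b c t : ℝ) : ℝ × ℝ × ℝ :=
  ((sin (heading₁ a) - sin (π / 2)) / a + (sin (heading₂ a b) - sin (heading₁ a)) / b
      + (sin (heading₃ a b c t) - sin (heading₂ a b)) / c,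
    (cos (π / 2) - cos (heading₁ a)) / a + (cos (heading₁ a) - cos (heading₂ a b)) / b
      + (cos (heading₂ a b) - cos (heading₃ a b c t)) / c,
    heading₃ a b c t)

theorem threeArcControl_trajectory {a b c t : ℝ} (ha : a ≠ 0) (hb : b ≠ 0) (hc : c ≠ 0)
    (ht : 2 * arcTime ≤ t) :
    (∫ r in (0 : ℝ)..t, cos (heading (threeArcControl a b c) r),
      ∫ r in (0 : ℝ)..t, sin (heading (threeArcControl a b c) r),
      heading (threeArcControl a b c) t) = endpoint a b c t := by
  set φ := heading (threeArcControl a b c)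
  have hu := intervalIntegrable_threeArcControl a b c
  have hT := arcTime_pos
  have h₁ : EqOn φ (fun r ↦ φ 0 + a * (r - 0)) (uIcc 0 arcTime) :=
    heading_eqOn_of_eqOn_Ioc hu hT.le fun τ hτ ↦ if_pos hτ.2
  have h₂ : EqOn φ (fun r ↦ φ arcTime + b * (r - arcTime)) (uIcc arcTime (2 * arcTime)) :=
    heading_eqOn_of_eqOn_Ioc hu (by linarith) fun τ hτ ↦ by
      simp only [threeArcControl, if_neg (not_le.2 hτ.1), if_pos hτ.2]
  have h₃ : EqOn φ (fun r ↦ φ (2 * arcTime) + c * (r - 2 * arcTime)) (uIcc (2 * arcTime) t) :=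
    heading_eqOn_of_eqOn_Ioc hu ht fun τ hτ ↦ by
      have hτ₁ : arcTime < τ := by linarith [hτ.1]
      simp only [threeArcControl, if_neg (not_le.2 hτ.1), if_neg (not_le.2 hτ₁)]
  have e₀ : φ 0 = π / 2 := heading_zero _
  have e₁ : φ arcTime = heading₁ a := by
    simp only [h₁ right_mem_uIcc, e₀, heading₁, sub_zero]
  have e₂ : φ (2 * arcTime) = heading₂ a b := by
    simp only [h₂ right_mem_uIcc, e₁, heading₂]; ring
  have e₃ : φ t = heading₃ a b c t := by
    simp only [h₃ right_mem_uIcc, e₂, heading₃]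
  have hcos : ∀ α β, IntervalIntegrable (fun r ↦ cos (φ r)) volume α β :=
    (continuous_cos.comp (continuous_heading hu)).intervalIntegrable
  have hsin : ∀ α β, IntervalIntegrable (fun r ↦ sin (φ r)) volume α β :=
    (continuous_sin.comp (continuous_heading hu)).intervalIntegrable
  rw [← integral_add_adjacent_intervals (hcos 0 arcTime) (hcos arcTime t),
    ← integral_add_adjacent_intervals (hcos arcTime (2 * arcTime)) (hcos (2 * arcTime) t),
    ← integral_add_adjacent_intervals (hsin 0 arcTime) (hsin arcTime t),
    ← integral_add_adjacent_intervals (hsin arcTime (2 * arcTime)) (hsin (2 * arcTime) t),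
    integral_cos_of_eqOn_affine ha h₁, integral_cos_of_eqOn_affine hb h₂,
    integral_cos_of_eqOn_affine hc h₃, integral_sin_of_eqOn_affine ha h₁,
    integral_sin_of_eqOn_affine hb h₂, integral_sin_of_eqOn_affine hc h₃, e₀, e₁, e₂, e₃,
    endpoint, add_assoc, add_assoc]

def toConfig : ℝ × ℝ × ℝ → ℝ × ℝ × Angle := Prod.map id (Prod.map id (↑))

theorem isOpenMap_toConfig : IsOpenMap toConfig :=
  IsOpenMap.id.prodMap (IsOpenMap.id.prodMap QuotientAddGroup.isOpenMap_coe)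

theorem toConfig_endpoint_mem_dubinsReach {a b c t : ℝ} (ha : a ∈ Icc (-1 : ℝ) 1 \ {0})
    (hb : b ∈ Icc (-1 : ℝ) 1 \ {0}) (hc : c ∈ Icc (-1 : ℝ) 1 \ {0}) (ht : 2 * arcTime ≤ t) :
    toConfig (endpoint a b c t) ∈ DubinsReach t := by
  refine ⟨threeArcControl a b c, measurable_threeArcControl a b c,
    threeArcControl_mem ha.1 hb.1 hc.1, ?_⟩
  rw [← threeArcControl_trajectory ha.2 hb.2 hc.2 ht]
  rfl

abbrev Params : Type := (ℝ × ℝ × ℝ) × ℝ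

/-- Recording the final time as a fourth coordinate makes the neighbourhoods produced by the
inverse function theorem uniform in `t`. -/
def extendedEndpoint (p : Params) : Params := (endpoint p.1.1 p.1.2.1 p.1.2.2 p.2, p.2)

def circleParams : Params := ((1 / 2, 1 / 2, 1 / 2), 4 * π)

def circleJacobian (v : Params) : Params :=
  ((6 * v.1.1 - 6 * v.1.2.2,
    (2 * arcTime - 2 * √3) * v.1.1 + (2 * arcTime + 4 * √3) * v.1.2.1
      + (2 * arcTime - 2 * √3) * v.1.2.2 + v.2,
    arcTime * (v.1.1 + v.1.2.1 + v.1.2.2) + v.2 / 2), v.2)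

theorem sin_heading₁_half : sin (heading₁ (1 / 2)) = -(1 / 2) := by
  rw [show heading₁ (1 / 2) = π / 6 + π by unfold heading₁ arcTime; ring, sin_add_pi,
    sin_pi_div_six]

theorem cos_heading₁_half : cos (heading₁ (1 / 2)) = -(√3 / 2) := by
  rw [show heading₁ (1 / 2) = π / 6 + π by unfold heading₁ arcTime; ring, cos_add_pi,
    cos_pi_div_six]

theorem sin_heading₂_half : sin (heading₂ (1 / 2) (1 / 2)) = -(1 / 2) := by
  rw [show heading₂ (1 / 2) (1 / 2) = -(π / 6) + 2 * π by unfold heading₂ heading₁ arcTime; ring,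
    sin_add_two_pi, sin_neg, sin_pi_div_six]

theorem cos_heading₂_half : cos (heading₂ (1 / 2) (1 / 2)) = √3 / 2 := by
  rw [show heading₂ (1 / 2) (1 / 2) = -(π / 6) + 2 * π by unfold heading₂ heading₁ arcTime; ring,
    cos_add_two_pi, cos_neg, cos_pi_div_six]

theorem heading₃_half : heading₃ (1 / 2) (1 / 2) (1 / 2) (4 * π) = π / 2 + 2 * π := by
  unfold heading₃ heading₂ heading₁ arcTime; ring

theorem hasStrictFDerivAt_extendedEndpoint_circleParams :
    ∃ L : Params →L[ℝ] Params, HasStrictFDerivAt extendedEndpoint L circleParams ∧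
      ∀ v, L v = circleJacobian v := by
  have hK : HasStrictFDerivAt (fun p : Params ↦ p.1) (ContinuousLinearMap.fst ℝ _ _) circleParams :=
    hasStrictFDerivAt_fst
  have hA := hK.fst
  have hB := hK.snd.fst
  have hC := hK.snd.snd
  have hT : HasStrictFDerivAt (fun p : Params ↦ p.2) (ContinuousLinearMap.snd ℝ _ _) circleParams :=
    hasStrictFDerivAt_snd
  have hθ₁ : HasStrictFDerivAt (fun p : Params ↦ heading₁ p.1.1) _ circleParams :=
    (hA.mul_const arcTime).const_add (π / 2)
  have hθ₂ : HasStrictFDerivAt (fun p : Params ↦ heading₂ p.1.1 p.1.2.1) _ circleParams :=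
    hθ₁.add (hB.mul_const arcTime)
  have hθ₃ : HasStrictFDerivAt (fun p : Params ↦ heading₃ p.1.1 p.1.2.1 p.1.2.2 p.2) _
      circleParams :=
    hθ₂.add (hC.mul (hT.sub_const (2 * arcTime)))
  have hA' := (hasStrictDerivAt_inv (by norm_num [circleParams] : circleParams.1.1 ≠ 0)
    ).comp_hasStrictFDerivAt circleParams hA
  have hB' := (hasStrictDerivAt_inv (by norm_num [circleParams] : circleParams.1.2.1 ≠ 0)
    ).comp_hasStrictFDerivAt circleParams hB
  have hC' := (hasStrictDerivAt_inv (by norm_num [circleParams] : circleParams.1.2.2 ≠ 0)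
    ).comp_hasStrictFDerivAt circleParams hC
  have hx := (((hθ₁.sin.sub_const (sin (π / 2))).mul hA').add ((hθ₂.sin.sub hθ₁.sin).mul hB')).add
    ((hθ₃.sin.sub hθ₂.sin).mul hC')
  have hy := (((hθ₁.cos.const_sub (cos (π / 2))).mul hA').add ((hθ₁.cos.sub hθ₂.cos).mul hB')).add
    ((hθ₂.cos.sub hθ₃.cos).mul hC')
  refine ⟨_, (hx.prodMk (hy.prodMk hθ₃)).prodMk hT, fun v ↦ ?_⟩
  simp only [circleJacobian, ContinuousLinearMap.prod_apply, add_apply,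
    sub_apply, smul_apply, ContinuousLinearMap.comp_apply,
    ContinuousLinearMap.coe_fst', ContinuousLinearMap.coe_snd', smul_eq_mul, circleParams,
    sin_heading₁_half, cos_heading₁_half, sin_heading₂_half, cos_heading₂_half,
    heading₃_half, sin_add_two_pi, cos_add_two_pi, sin_pi_div_two, cos_pi_div_two,
    Pi.sub_apply, Function.comp_apply, neg_apply, Prod.mk.injEq, and_true]
  refine ⟨?_, ?_, ?_⟩ <;> unfold arcTime <;> ring

theorem eq_zero_of_circleJacobian_eq_zero {v : Params} (hv : circleJacobian v = 0) : v = 0 := by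
  obtain ⟨⟨a, b, c⟩, t⟩ := v
  simp only [circleJacobian, Prod.mk_eq_zero] at hv ⊢
  obtain ⟨⟨hx, hy, hθ⟩, rfl⟩ := hv
  have hsum : a + b + c = 0 := by
    simpa [arcTime_pos.ne'] using hθ
  have hc : c = a := by linarith
  have hb : b = -2 * a := by linarith
  have ha : a = 0 := by
    subst hb hc
    have h3 : (0 : ℝ) < √3 := by positivity
    nlinarith
  subst ha
  exact ⟨⟨rfl, by linarith, by linarith⟩, rfl⟩

theorem range_eq_top_of_eq_circleJacobian {L : Params →L[ℝ] Params}
    (hL : ∀ v, L v = circleJacobian v) : LinearMap.range (L : Params →ₗ[ℝ] Params) = ⊤ := by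
  refine LinearMap.range_eq_top.2 (LinearMap.injective_iff_surjective.1 ?_)
  exact (injective_iff_map_eq_zero L).2 fun v hv ↦
    eq_zero_of_circleJacobian_eq_zero ((hL v).symm.trans hv)

theorem extendedEndpoint_circleParams :
    extendedEndpoint circleParams = ((0, 0, π / 2 + 2 * π), 4 * π) := by
  simp only [extendedEndpoint, endpoint, circleParams, sin_heading₁_half, cos_heading₁_half,
    sin_heading₂_half, cos_heading₂_half, heading₃_half, sin_add_two_pi, cos_add_two_pi,
    sin_pi_div_two, cos_pi_div_two, Prod.mk.injEq, and_true]
  constructor <;> ring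

def paramSet : Set Params := (Ioo 0 1 ×ˢ Ioo 0 1 ×ˢ Ioo 0 1) ×ˢ Ioi (2 * arcTime)

theorem isOpen_paramSet : IsOpen paramSet :=
  (isOpen_Ioo.prod (isOpen_Ioo.prod isOpen_Ioo)).prod isOpen_Ioi

theorem circleParams_mem_paramSet : circleParams ∈ paramSet := by
  have := pi_pos
  simp only [paramSet, circleParams, arcTime, mem_prod, mem_Ioo, mem_Ioi]
  norm_num
  linarith

theorem toConfig_mem_dubinsReach_of_mem_image {q : ℝ × ℝ × ℝ} {t : ℝ}
    (h : (q, t) ∈ extendedEndpoint '' paramSet) : toConfig q ∈ DubinsReach t := by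
  obtain ⟨⟨⟨a, b, c⟩, s⟩, ⟨⟨ha, hb, hc⟩, hs⟩, hq⟩ := h
  simp only [extendedEndpoint, Prod.mk.injEq] at hq
  obtain ⟨rfl, rfl⟩ := hq
  have hadm : ∀ x ∈ Ioo (0 : ℝ) 1, x ∈ Icc (-1 : ℝ) 1 \ {0} :=
    fun x hx ↦ ⟨⟨by linarith [hx.1], hx.2.le⟩, hx.1.ne'⟩
  exact toConfig_endpoint_mem_dubinsReach (hadm a ha) (hadm b hb) (hadm c hc) hs.le

theorem toConfig_circle_endpoint :
    toConfig (0, 0, π / 2 + 2 * π) = (0, 0, ((π / 2 : ℝ) : Angle)) := by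
  simp [toConfig, Angle.coe_add, Angle.coe_two_pi]

end Dubins

end

open Dubins

theorem interior_at_4pi :
    ∃ δ₀ > (0 : ℝ), ∀ t : ℝ, |t - 4 * Real.pi| < δ₀ →
      ((0 : ℝ), (0 : ℝ), (↑(Real.pi / 2) : Real.Angle)) ∈ interior (DubinsReach t) := by
  obtain ⟨L, hL, hLv⟩ := hasStrictFDerivAt_extendedEndpoint_circleParams
  have himage : extendedEndpoint '' paramSet ∈ 𝓝 (((0 : ℝ), (0 : ℝ), π / 2 + 2 * π), 4 * π) := by
    rw [← extendedEndpoint_circleParams,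
      ← hL.map_nhds_eq_of_surj (range_eq_top_of_eq_circleJacobian hLv)]
    exact image_mem_map (isOpen_paramSet.mem_nhds circleParams_mem_paramSet)
  obtain ⟨U, hU, V, hV, hUV⟩ := mem_nhds_prod_iff.1 himage
  obtain ⟨δ, hδ, hδV⟩ := Metric.mem_nhds_iff.1 hV
  refine ⟨δ, hδ, fun t ht ↦ mem_interior_iff_mem_nhds.2 ?_⟩
  rw [← toConfig_circle_endpoint]
  refine mem_of_superset (isOpenMap_toConfig.image_mem_nhds hU) ?_
  rintro _ ⟨q, hq, rfl⟩
  exact toConfig_mem_dubinsReach_of_mem_image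
    (hUV ⟨hq, hδV (by rwa [Metric.mem_ball, Real.dist_eq])⟩)
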